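/- arXiv:1905.10209 — 6 statements merged into one kernel-verified Lean document; each statement's English description precedes it below -/
import Mathlib

section
/- Let A and B be disjoint measurable subsets of ℝ^d with positive probability, C = A ∪ B, and suppose the conditional covariance matrices V_P(A), V_P(B), V_P(C) are positive definite. Then (P(A)/P(C))·ln det V_P(A) + (P(B)/P(C))·ln det V_P(B) ≤ ln det V_P(C). -/
open MeasureTheory Matrix

/-- Conditional mean of the identity `X ~ P` given `X ∈ S`. -/
noncomputable def condMean {d : ℕ} (P : Measure (Fin d → ℝ)) (S : Set (Fin d → ℝ)) :
    Fin d → ℝ :=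
  ((P S).toReal)⁻¹ • ∫ x in S, x ∂P

/-- Conditional covariance matrix `V_P(S)`, entrywise. -/
noncomputable def condCov {d : ℕ} (P : Measure (Fin d → ℝ)) (S : Set (Fin d → ℝ)) :
    Matrix (Fin d) (Fin d) ℝ :=
  Matrix.of fun i j =>
    ((P S).toReal)⁻¹ * ∫ x in S, (x i - condMean P S i) * (x j - condMean P S j) ∂P

/-!
In every direction `v`, `P(S) · vᵀ V_P(S) v` is the integral over `S` of the squared deviation of
`v ⬝ᵥ x` from its conditional mean, and replacing that mean by any other constant can only increase
the integral. Using the mean over `C = A ∪ B` on both `A` and `B` gives the Löwner inequality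
`P(A) V_P(A) + P(B) V_P(B) ⪯ P(C) V_P(C)`. Dividing by `P(C)`, the convex combination
`s V_P(A) + t V_P(B)` lies below `V_P(C)`, and concavity of `log det` together with monotonicity of
`det` conclude. After congruence by `M^{-1/2}`, both matrix facts become statements about the
eigenvalues `λᵢ > 0` of `M^{-1/2} N M^{-1/2}`, since `det (a M + b N) = det M · ∏ (a + b λᵢ)`.
-/

open ProbabilityTheory
open scoped MatrixOrder

namespace Matrix

lemma convex_setOf_posDef {n : Type*} : Convex ℝ {M : Matrix n n ℝ | M.PosDef} :=
  convex_iff_forall_pos.2 fun _ hM _ hN _ _ hs ht _ => (hM.smul hs).add (hN.smul ht)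

variable {n : Type*} [Fintype n] [DecidableEq n]

lemma IsHermitian.det_smul_one_add_smul {A : Matrix n n ℝ} (hA : A.IsHermitian) (a b : ℝ) :
    (a • 1 + b • A).det = ∏ i, (a + b * hA.eigenvalues i) := by
  have : a • 1 + b • A = cfc (fun x => a + b * x) A := by
    rw [cfc_add .., cfc_const_mul .., cfc_id' .., cfc_const .., Algebra.algebraMap_eq_smul_one]
  rw [this, hA.cfc_eq, IsHermitian.cfc, Unitary.conjStarAlgAut_apply, det_mul, det_mul, mul_comm,
    ← mul_assoc, ← det_mul, Unitary.coe_star_mul_self, det_one, one_mul, det_diagonal]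
  rfl

lemma PosDef.det_smul_add_smul {M : Matrix n n ℝ} (hM : M.PosDef) (N : Matrix n n ℝ) (a b : ℝ) :
    (a • M + b • N).det =
      M.det * (a • 1 + b • (CFC.sqrt M⁻¹ * N * CFC.sqrt M⁻¹)).det := by
  rw [← hM.posSemidef.inv_sqrt]
  set S := CFC.sqrt M
  have hSS : S * S = M := CFC.sqrt_mul_sqrt_self M hM.posSemidef.nonneg
  have hS : IsUnit S.det := by
    refine isUnit_iff_ne_zero.2 fun h => hM.det_pos.ne' ?_
    rw [← hSS, det_mul, h, zero_mul]
  have : a • M + b • N = S * (a • 1 + b • (S⁻¹ * N * S⁻¹)) * S := by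
    simp [mul_add, add_mul, Matrix.mul_assoc, nonsing_inv_mul _ hS,
      mul_nonsing_inv_cancel_left _ _ hS, hSS]
  rw [this, det_mul, det_mul, ← hSS, det_mul]
  ring

lemma PosSemidef.sqrt_inv_mul_mul_sqrt_inv {M N : Matrix n n ℝ} (hN : N.PosSemidef) :
    (CFC.sqrt M⁻¹ * N * CFC.sqrt M⁻¹).PosSemidef := by
  have := hN.conjTranspose_mul_mul_same (CFC.sqrt M⁻¹)
  rwa [(CFC.sqrt_nonneg M⁻¹).posSemidef.1.eq] at this

lemma PosDef.sqrt_inv_mul_mul_sqrt_inv {M N : Matrix n n ℝ} (hN : N.PosDef) (hM : M.PosDef) :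
    (CFC.sqrt M⁻¹ * N * CFC.sqrt M⁻¹).PosDef := by
  have hR : IsUnit (CFC.sqrt M⁻¹) := IsStrictlyPositive.isUnit_cfcSqrt _ hM.inv.isStrictlyPositive
  have := hN.conjTranspose_mul_mul_same (mulVec_injective_iff_isUnit.2 hR)
  rwa [(CFC.sqrt_nonneg M⁻¹).posSemidef.1.eq] at this

lemma PosDef.det_le_det_of_le {M N : Matrix n n ℝ} (hM : M.PosDef) (h : M ≤ N) :
    M.det ≤ N.det := by
  have hW := PosSemidef.sqrt_inv_mul_mul_sqrt_inv (M := M) (le_iff.1 h)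
  calc M.det = M.det * ∏ _i : n, (1 : ℝ) := by simp
    _ ≤ M.det * ∏ i, (1 + 1 * hW.1.eigenvalues i) := by
        gcongr with i
        · exact hM.det_pos.le
        · linarith [hW.eigenvalues_nonneg i]
    _ = N.det := by
        rw [← hW.1.det_smul_one_add_smul, ← hM.det_smul_add_smul, one_smul, one_smul,
          add_sub_cancel]

lemma concaveOn_log_det : ConcaveOn ℝ {M : Matrix n n ℝ | M.PosDef} fun M => Real.log M.det := by
  refine ⟨convex_setOf_posDef, fun M (hM : M.PosDef) N (hN : N.PosDef) s t hs ht hst => ?_⟩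
  have hW := hN.sqrt_inv_mul_mul_sqrt_inv hM
  set μ := hW.1.eigenvalues
  have hμ : ∀ i, 0 < μ i := hW.eigenvalues_pos
  have hdetN : N.det = M.det * ∏ i, μ i := by
    simpa [hW.1.det_eq_prod_eigenvalues] using hM.det_smul_add_smul N 0 1
  have hdet : (s • M + t • N).det = M.det * ∏ i, (s + t * μ i) := by
    rw [hM.det_smul_add_smul, hW.1.det_smul_one_add_smul]
  have hlog (i : n) : t * Real.log (μ i) ≤ Real.log (s + t * μ i) := by
    simpa using strictConcaveOn_log_Ioi.concaveOn.2 (Set.mem_Ioi.2 one_pos) (Set.mem_Ioi.2 (hμ i))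
      hs ht hst
  have hpos (i : n) : 0 < s + t * μ i := by
    have := hμ i
    rcases hs.eq_or_lt with rfl | hs
    · simp_all
    · positivity
  simp only [smul_eq_mul]
  rw [hdetN, hdet, Real.log_mul hM.det_pos.ne' (Finset.prod_pos fun i _ => (hμ i)).ne',
    Real.log_mul hM.det_pos.ne' (Finset.prod_pos fun i _ => (hpos i)).ne',
    Real.log_prod fun i _ => (hμ i).ne', Real.log_prod fun i _ => (hpos i).ne']
  calc s * Real.log M.det + t * (Real.log M.det + ∑ i, Real.log (μ i))
      = Real.log M.det + ∑ i, t * Real.log (μ i) := by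
        rw [← Finset.mul_sum]; linear_combination Real.log M.det * hst
    _ ≤ Real.log M.det + ∑ i, Real.log (s + t * μ i) := by gcongr with i; exact hlog i

end Matrix

section ConditionalMoments

variable {Ω : Type*} [MeasurableSpace Ω] {P : Measure Ω} {S : Set Ω}

lemma integral_cond {E : Type*} [NormedAddCommGroup E] [NormedSpace ℝ E] (g : Ω → E) :
    ∫ x, g x ∂P[|S] = (P.real S)⁻¹ • ∫ x in S, g x ∂P := by
  rw [ProbabilityTheory.cond, integral_smul_measure, ENNReal.toReal_inv, measureReal_def]

lemma measureReal_mul_integral_cond [IsFiniteMeasure P] (hS : P S ≠ 0) (g : Ω → ℝ) :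
    P.real S * ∫ x, g x ∂P[|S] = ∫ x in S, g x ∂P := by
  rw [integral_cond, smul_eq_mul,
    mul_inv_cancel_left₀ ((measureReal_ne_zero_iff (measure_ne_top P S)).2 hS)]

lemma measureReal_mul_variance_cond_le [IsFiniteMeasure P] (hS : P S ≠ 0) {f : Ω → ℝ}
    (hf : AEStronglyMeasurable f P) (c : ℝ) :
    P.real S * Var[f; P[|S]] ≤ ∫ x in S, (f x - c) ^ 2 ∂P := by
  have := cond_isProbabilityMeasure (μ := P) hS
  have hf' : AEStronglyMeasurable f P[|S] := hf.mono_ac cond_absolutelyContinuous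
  rw [← variance_sub_const hf' c, ← measureReal_mul_integral_cond hS]
  gcongr
  exact variance_le_expectation_sq (hf'.sub aestronglyMeasurable_const)

lemma measureReal_mul_variance_cond [IsFiniteMeasure P] (hS : P S ≠ 0) {f : Ω → ℝ}
    (hf : AEMeasurable f P) :
    P.real S * Var[f; P[|S]] = ∫ x in S, (f x - ∫ y, f y ∂P[|S]) ^ 2 ∂P := by
  rw [variance_eq_integral (hf.mono_ac cond_absolutelyContinuous),
    measureReal_mul_integral_cond hS]

end ConditionalMoments

section CondCov

variable {d : ℕ} {P : Measure (Fin d → ℝ)} {S : Set (Fin d → ℝ)}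

lemma condMean_eq_integral_cond : condMean P S = ∫ x, x ∂P[|S] := by
  rw [integral_cond]
  rfl

lemma condCov_apply_eq_covariance (hX : Integrable (fun x : Fin d → ℝ => x) P[|S]) (i j : Fin d) :
    condCov P S i j = cov[fun x => x i, fun x => x j; P[|S]] := by
  rw [condCov, of_apply, covariance, integral_cond, condMean_eq_integral_cond,
    eval_integral hX.eval, eval_integral hX.eval, smul_eq_mul]
  rfl

lemma condCov_isHermitian (P : Measure (Fin d → ℝ)) (S : Set (Fin d → ℝ)) :
    (condCov P S).IsHermitian :=
  IsHermitian.ext fun i j => by simp only [condCov, of_apply, star_trivial, mul_comm]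

lemma dotProduct_condCov_mulVec [IsFiniteMeasure P]
    (hX : MemLp (fun x : Fin d → ℝ => x) 2 P[|S]) (v : Fin d → ℝ) :
    v ⬝ᵥ (condCov P S *ᵥ v) = Var[fun x => v ⬝ᵥ x; P[|S]] := by
  have hXv : ∀ i, MemLp (fun x : Fin d → ℝ => v i * x i) 2 P[|S] :=
    fun i => (hX.eval i).const_mul (v i)
  rw [← covariance_self (by fun_prop)]
  simp only [dotProduct]
  rw [covariance_fun_sum_fun_sum hXv hXv]
  simp only [mulVec, dotProduct, Finset.mul_sum, covariance_const_mul_left,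
    covariance_const_mul_right, condCov_apply_eq_covariance (hX.integrable one_le_two)]
  refine Finset.sum_congr rfl fun i _ => Finset.sum_congr rfl fun j _ => by ring

end CondCov

lemma measureReal_smul_condCov_add_le {d : ℕ} {P : Measure (Fin d → ℝ)} [IsFiniteMeasure P]
    (hX : MemLp (fun x : Fin d → ℝ => x) 2 P) {A B : Set (Fin d → ℝ)} (hB : MeasurableSet B)
    (hAB : Disjoint A B) (hPA : P A ≠ 0) (hPB : P B ≠ 0) :
    P.real A • condCov P A + P.real B • condCov P B ≤ P.real (A ∪ B) • condCov P (A ∪ B) := by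
  have hC : P (A ∪ B) ≠ 0 := fun h => hPA (measure_mono_null Set.subset_union_left h)
  have hXcond {S : Set (Fin d → ℝ)} (hS : P S ≠ 0) : MemLp (fun x : Fin d → ℝ => x) 2 P[|S] :=
    (hX.restrict S).smul_measure (ENNReal.inv_ne_top.2 hS)
  rw [Matrix.le_iff]
  refine PosSemidef.of_dotProduct_mulVec_nonneg (((condCov_isHermitian P _).smul (.all _)).sub
    (((condCov_isHermitian P A).smul (.all _)).add ((condCov_isHermitian P B).smul (.all _))))
    fun v => ?_
  simp only [star_trivial, sub_mulVec, add_mulVec, smul_mulVec, dotProduct_sub, dotProduct_add,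
    dotProduct_smul, smul_eq_mul, sub_nonneg, dotProduct_condCov_mulVec (hXcond hPA),
    dotProduct_condCov_mulVec (hXcond hPB), dotProduct_condCov_mulVec (hXcond hC)]
  set f := fun x : Fin d → ℝ => v ⬝ᵥ x
  have hf : MemLp f 2 P := by
    simpa [f, dotProduct] using memLp_finsetSum Finset.univ fun i _ => (hX.eval i).const_mul (v i)
  set m := ∫ y, f y ∂P[|A ∪ B]
  have hdev : Integrable (fun x => (f x - m) ^ 2) P := (hf.sub (memLp_const m)).integrable_sq
  calc P.real A * Var[f; P[|A]] + P.real B * Var[f; P[|B]]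
      ≤ ∫ x in A, (f x - m) ^ 2 ∂P + ∫ x in B, (f x - m) ^ 2 ∂P :=
        add_le_add (measureReal_mul_variance_cond_le hPA hf.1 m)
          (measureReal_mul_variance_cond_le hPB hf.1 m)
    _ = ∫ x in A ∪ B, (f x - m) ^ 2 ∂P :=
        (setIntegral_union hAB hB hdev.integrableOn hdev.integrableOn).symm
    _ = P.real (A ∪ B) * Var[f; P[|A ∪ B]] :=
        (measureReal_mul_variance_cond hC hf.1.aemeasurable).symm

theorem logDet_condCov_merge_general {d : ℕ}
    (P : Measure (Fin d → ℝ)) [IsProbabilityMeasure P]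
    (A B : Set (Fin d → ℝ)) (hB : MeasurableSet B)
    (hAB : Disjoint A B) (hPA : 0 < P A) (hPB : 0 < P B)
    (hint2 : Integrable (fun x : Fin d → ℝ => ‖x‖ ^ 2) P)
    (hVA : (condCov P A).PosDef) (hVB : (condCov P B).PosDef) :
    ((P A).toReal / (P (A ∪ B)).toReal) * Real.log (condCov P A).det
      + ((P B).toReal / (P (A ∪ B)).toReal) * Real.log (condCov P B).det
      ≤ Real.log (condCov P (A ∪ B)).det := by
  have hX : MemLp (fun x : Fin d → ℝ => x) 2 P :=
    (memLp_two_iff_integrable_sq_norm aestronglyMeasurable_id).2 hint2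
  have hPC : P.real (A ∪ B) = P.real A + P.real B := measureReal_union hAB hB
  have hC : 0 < P.real (A ∪ B) :=
    ENNReal.toReal_pos ((measure_mono_null Set.subset_union_left).mt hPA.ne') (measure_ne_top P _)
  set s := P.real A / P.real (A ∪ B)
  set t := P.real B / P.real (A ∪ B)
  have hst : s + t = 1 := by rw [← add_div, ← hPC, div_self hC.ne']
  have hmix : s • condCov P A + t • condCov P B ≤ condCov P (A ∪ B) := by
    have := smul_le_smul_of_nonneg_left
      (measureReal_smul_condCov_add_le hX hB hAB hPA.ne' hPB.ne') (inv_nonneg.2 hC.le)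
    rwa [smul_add, smul_smul, smul_smul, inv_smul_smul₀ hC.ne', ← div_eq_inv_mul,
      ← div_eq_inv_mul] at this
  have hs : 0 ≤ s := by positivity
  have ht : 0 ≤ t := by positivity
  have hmix_posDef : (s • condCov P A + t • condCov P B).PosDef :=
    convex_setOf_posDef hVA hVB hs ht hst
  calc s * Real.log (condCov P A).det + t * Real.log (condCov P B).det
      ≤ Real.log (s • condCov P A + t • condCov P B).det := concaveOn_log_det.2 hVA hVB hs ht hst
    _ ≤ Real.log (condCov P (A ∪ B)).det :=
      Real.log_le_log hmix_posDef.det_pos (hmix_posDef.det_le_det_of_le hmix)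

theorem logDet_condCov_merge {d : ℕ}
    (P : Measure (Fin d → ℝ)) [IsProbabilityMeasure P]
    (A B : Set (Fin d → ℝ)) (hA : MeasurableSet A) (hB : MeasurableSet B)
    (hAB : Disjoint A B) (hPA : 0 < P A) (hPB : 0 < P B)
    (hint1 : Integrable (fun x : Fin d → ℝ => x) P)
    (hint2 : Integrable (fun x : Fin d → ℝ => ‖x‖ ^ 2) P)
    (hVA : (condCov P A).PosDef) (hVB : (condCov P B).PosDef)
    (hVC : (condCov P (A ∪ B)).PosDef) :
    ((P A).toReal / (P (A ∪ B)).toReal) * Real.log (condCov P A).det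
      + ((P B).toReal / (P (A ∪ B)).toReal) * Real.log (condCov P B).det
      ≤ Real.log (condCov P (A ∪ B)).det :=
  logDet_condCov_merge_general P A B hB hAB hPA hPB hint2 hVA hVB
end

section
/- Let α, β, a, b > 0 and let (a_n), (b_n) be real sequences with a_n / (α n^a) → 1 and n^b·(b_n − β) → 0. Then a_n^{b_n} / (α n^a)^β → 1 as n → ∞. -/
/-!
Write `Dₙ = α nᵃ` and `Aₙ^{Bₙ} / Dₙ^β = (Aₙ / Dₙ)^{Bₙ} · Dₙ^{Bₙ - β}`. The first factor tends to
`1 ^ β = 1` by continuity of `rpow` away from base `0`. The second is `exp ((Bₙ - β) log Dₙ)`, and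
`(Bₙ - β) log Dₙ = nᵇ (Bₙ - β) · log Dₙ / nᵇ → 0 · 0` because `log Dₙ = O(log n) = o(nᵇ)`.
-/

open Filter Topology Asymptotics Real

theorem Filter.Tendsto.mul_zero_of_isBigO {ι : Type*} {l : Filter ι} {u v ε : ι → ℝ}
    (huv : u =O[l] v) (h : Tendsto (fun i => v i * ε i) l (𝓝 0)) :
    Tendsto (fun i => u i * ε i) l (𝓝 0) :=
  (huv.mul (isBigO_refl ε l)).trans_tendsto h

theorem isLittleO_log_const_mul_rpow_atTop {α : ℝ} (hα : α ≠ 0) (a : ℝ) {b : ℝ} (hb : 0 < b) :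
    (fun x : ℝ => log (α * x ^ a)) =o[atTop] (fun x => x ^ b) := by
  have hconst : (fun _ : ℝ => log α) =o[atTop] (fun x => x ^ b) :=
    (isLittleO_const_left.2 <| Or.inr <| tendsto_norm_atTop_atTop.comp (tendsto_rpow_atTop hb))
  refine (hconst.add ((isLittleO_log_rpow_atTop hb).const_mul_left a)).congr' ?_ .rfl
  filter_upwards [eventually_gt_atTop 0] with x hx
  rw [log_mul hα (rpow_pos_of_pos hx a).ne', log_rpow hx]

theorem tendsto_rpow_div_rpow_of_tendsto_div {ι : Type*} {l : Filter ι} {A B D : ι → ℝ} {β : ℝ}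
    (hD : ∀ᶠ i in l, 0 < D i) (hA : Tendsto (fun i => A i / D i) l (𝓝 1))
    (hB : Tendsto B l (𝓝 β)) (hBD : Tendsto (fun i => (B i - β) * log (D i)) l (𝓝 0)) :
    Tendsto (fun i => A i ^ B i / D i ^ β) l (𝓝 1) := by
  have hratio : Tendsto (fun i => (A i / D i) ^ B i) l (𝓝 1) := by
    simpa using hA.rpow hB (.inl one_ne_zero)
  have hscale : Tendsto (fun i => D i ^ (B i - β)) l (𝓝 1) := by
    have hexp : Tendsto (fun i => exp ((B i - β) * log (D i))) l (𝓝 1) := by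
      simpa [Function.comp_def] using (continuous_exp.tendsto 0).comp hBD
    refine hexp.congr' ?_
    filter_upwards [hD] with i hi
    rw [rpow_def_of_pos hi, mul_comm]
  have hprod := hratio.mul hscale
  rw [one_mul] at hprod
  refine hprod.congr' ?_
  filter_upwards [hD, hA.eventually (lt_mem_nhds one_pos)] with i hDi hq
  have hAi : 0 < A i := by simpa [hDi.ne'] using mul_pos hq hDi
  rw [div_rpow hAi.le hDi.le, rpow_sub hDi]
  field_simp

theorem rpow_asymptotics_general (α β a b : ℝ) (hα : 0 < α)
    (hb : 0 < b) (A B : ℕ → ℝ)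
    (hA : Tendsto (fun n : ℕ => A n / (α * (n : ℝ) ^ a)) atTop (𝓝 1))
    (hB : Tendsto (fun n : ℕ => (n : ℝ) ^ b * (B n - β)) atTop (𝓝 0)) :
    Tendsto (fun n : ℕ => A n ^ B n / (α * (n : ℝ) ^ a) ^ β) atTop (𝓝 1) := by
  have hn : Tendsto (fun n : ℕ => (n : ℝ)) atTop atTop := tendsto_natCast_atTop_atTop
  have hD : ∀ᶠ n : ℕ in atTop, 0 < α * (n : ℝ) ^ a := by
    filter_upwards [hn.eventually_gt_atTop 0] with n hn using mul_pos hα (rpow_pos_of_pos hn a)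
  have hone : (fun _ : ℕ => (1 : ℝ)) =O[atTop] (fun n : ℕ => (n : ℝ) ^ b) :=
    (isLittleO_one_left_iff ℝ).2 (tendsto_norm_atTop_atTop.comp ((tendsto_rpow_atTop hb).comp hn))
      |>.isBigO
  have hlog := ((isLittleO_log_const_mul_rpow_atTop hα.ne' a hb).comp_tendsto hn).isBigO
  refine tendsto_rpow_div_rpow_of_tendsto_div hD hA ?_ ?_
  · simpa using (hB.mul_zero_of_isBigO hone).add_const β
  · simpa only [mul_comm, Function.comp_apply] using hB.mul_zero_of_isBigO hlog

theorem rpow_asymptotics (α β a b : ℝ) (hα : 0 < α) (hβ : 0 < β)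
    (ha : 0 < a) (hb : 0 < b) (A B : ℕ → ℝ)
    (hApos : ∀ᶠ n in atTop, 0 < A n)
    (hA : Tendsto (fun n : ℕ => A n / (α * (n : ℝ) ^ a)) atTop (𝓝 1))
    (hB : Tendsto (fun n : ℕ => (n : ℝ) ^ b * (B n - β)) atTop (𝓝 0)) :
    Tendsto (fun n : ℕ => A n ^ B n / (α * (n : ℝ) ^ a) ^ β) atTop (𝓝 1) :=
  rpow_asymptotics_general α β a b hα hb A B hA hB
end

section
/- Let λ > 0 and let (x_n) be a real sequence with x_n/(λn) → 1 and x_n/n − λ = o(n^{−a}) for some a > 0. Then the n-th root of Γ(x_n) satisfies Γ(x_n)^{1/n} / (λ n / e)^{λ} → 1 as n → ∞. -/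
/-!
Stirling's formula for `m !`, together with the monotonicity of `Γ` on `[2, ∞)` and of
`y ↦ y (log y - 1)` on `[1, ∞)`, gives `log Γ(y) = y (log y - 1) + o(y)` by comparing `y` with
`⌊y⌋`. Writing `x_n = q_n n` with `q_n → λ`, this turns `(log Γ(x_n)) / n - λ (log (λ n) - 1)`
into `q_n log q_n - λ log λ - (q_n - λ) + (q_n - λ) log n + o(1)`; the only delicate term is
`(q_n - λ) log n`, which tends to `0` because `q_n - λ = o(n^(-a))`.
-/

open Filter Topology Asymptotics Real
open scoped Nat

lemma isLittleO_natCast_comp_add_one {f : ℕ → ℝ} (h : f =o[atTop] (fun m => (m : ℝ))) :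
    (fun m => f (m + 1)) =o[atTop] (fun m => (m : ℝ)) := by
  refine (h.comp_tendsto (tendsto_add_atTop_nat 1)).trans_isBigO (IsBigO.of_bound 2 ?_)
  filter_upwards [eventually_ge_atTop 1] with m hm
  have hm' : (1 : ℝ) ≤ m := by exact_mod_cast hm
  simp only [Function.comp_apply, Nat.cast_add, Nat.cast_one, norm_eq_abs]
  rw [abs_of_pos (by positivity), abs_of_pos (by positivity)]
  linarith

namespace Real

lemma monotoneOn_mul_log_sub_one : MonotoneOn (fun y : ℝ => y * (log y - 1)) (Set.Ici 1) := by
  intro m (hm : 1 ≤ m) y (hy : 1 ≤ y) hmy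
  have hm0 : 0 < m := by linarith
  have hratio := one_sub_inv_le_log_of_pos (div_pos (hm0.trans_le hmy) hm0)
  rw [inv_div, log_div (by positivity) hm0.ne'] at hratio
  have hlog : y - m ≤ y * (log y - log m) := by
    have := mul_le_mul_of_nonneg_left hratio (by linarith : 0 ≤ y)
    rwa [mul_sub, mul_one, mul_div_cancel₀ _ (by positivity)] at this
  nlinarith [mul_nonneg (sub_nonneg.2 hmy) (log_nonneg hm)]

lemma mul_log_mul_sub_one (t : ℝ) {s : ℝ} (hs : s ≠ 0) :
    t * (log (t * s) - 1) = t * log t - t + t * log s := by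
  rcases eq_or_ne t 0 with rfl | ht
  · simp
  rw [log_mul ht hs]
  ring

lemma isLittleO_log_natCast : (fun m : ℕ => log m) =o[atTop] (fun m => (m : ℝ)) :=
  isLittleO_log_id_atTop.comp_tendsto tendsto_natCast_atTop_atTop

lemma isLittleO_log_factorial_sub :
    (fun m : ℕ => log (m ! : ℝ) - m * (log m - 1)) =o[atTop] (fun m => (m : ℝ)) := by
  have hunbounded : Tendsto (fun m : ℕ => ‖(m : ℝ)‖) atTop atTop :=
    tendsto_norm_atTop_atTop.comp tendsto_natCast_atTop_atTop
  have hstirling : (fun m : ℕ => log (Stirling.stirlingSeq m)) =o[atTop] (fun m => (m : ℝ)) :=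
    ((Stirling.tendsto_stirlingSeq_sqrt_pi.log (by positivity)).isBigO_one ℝ).trans_isLittleO
      (isLittleO_const_left.2 (.inr hunbounded))
  have hconst : (fun _ : ℕ => log 2 / 2) =o[atTop] (fun m => (m : ℝ)) :=
    isLittleO_const_left.2 (.inr hunbounded)
  refine ((hstirling.add hconst).add (isLittleO_log_natCast.const_mul_left (1 / 2))).congr' ?_ .rfl
  filter_upwards [eventually_ne_atTop 0] with m hm
  have hm' : (m : ℝ) ≠ 0 := by exact_mod_cast hm
  rw [Stirling.log_stirlingSeq_formula, log_mul two_ne_zero hm', log_div hm' (exp_ne_zero 1),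
    log_exp]
  ring

lemma log_Gamma_sub_le_log_factorial_floor_sub {y : ℝ} (hy : 2 ≤ y) :
    log (Gamma y) - y * (log y - 1) ≤ log (⌊y⌋₊ ! : ℝ) - ⌊y⌋₊ * (log ⌊y⌋₊ - 1) := by
  have hfloor : (2 : ℝ) ≤ ⌊y⌋₊ := by exact_mod_cast Nat.le_floor (by exact_mod_cast hy)
  have hGamma : Gamma y ≤ Gamma (⌊y⌋₊ + 1) :=
    Gamma_strictMonoOn_Ici.monotoneOn hy (by simp only [Set.mem_Ici]; linarith)
      (Nat.lt_floor_add_one y).le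
  rw [Gamma_nat_eq_factorial] at hGamma
  have hlog := log_le_log (Gamma_pos_of_pos (by linarith)) hGamma
  have hmono : (⌊y⌋₊ : ℝ) * (log ⌊y⌋₊ - 1) ≤ y * (log y - 1) :=
    monotoneOn_mul_log_sub_one (by simp only [Set.mem_Ici]; linarith)
      (by simp only [Set.mem_Ici]; linarith) (Nat.floor_le (by linarith))
  linarith

lemma log_factorial_floor_succ_sub_le_log_Gamma_sub {y : ℝ} (hy : 2 ≤ y) :
    log ((⌊y⌋₊ + 1) ! : ℝ) - ((⌊y⌋₊ + 1 : ℕ) : ℝ) * (log ((⌊y⌋₊ + 1 : ℕ) : ℝ) - 1)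
      - (log ((⌊y⌋₊ + 1 : ℕ) : ℝ) + log ⌊y⌋₊) ≤ log (Gamma y) - y * (log y - 1) := by
  set m := ⌊y⌋₊
  have hm : (2 : ℝ) ≤ m := by exact_mod_cast Nat.le_floor (by exact_mod_cast hy)
  have hfactorial : ((m + 1) ! : ℝ) = ((m + 1 : ℕ) : ℝ) * m * Gamma m := by
    rw [← Gamma_nat_eq_factorial, Nat.cast_succ, Gamma_add_one (by positivity),
      Gamma_add_one (by positivity)]
    ring
  have hGamma : Gamma m ≤ Gamma y :=
    Gamma_strictMonoOn_Ici.monotoneOn hm (by simpa using hy) (Nat.floor_le (by linarith))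
  have hlog := log_le_log (Gamma_pos_of_pos (by linarith)) hGamma
  have hmono : y * (log y - 1) ≤ ((m + 1 : ℕ) : ℝ) * (log ((m + 1 : ℕ) : ℝ) - 1) :=
    monotoneOn_mul_log_sub_one (by simp only [Set.mem_Ici]; linarith)
      (by simp only [Set.mem_Ici]; push_cast; linarith)
      (by push_cast; exact (Nat.lt_floor_add_one y).le)
  rw [hfactorial, log_mul (by positivity) (Gamma_pos_of_pos (by linarith)).ne',
    log_mul (by positivity) (by positivity)]
  linarith

theorem isLittleO_log_Gamma_sub : (fun y => log (Gamma y) - y * (log y - 1)) =o[atTop] id := by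
  set A : ℕ → ℝ := fun m => log (m ! : ℝ) - m * (log m - 1)
  have hL : (fun m : ℕ => |A m| + log m) =o[atTop] (fun m => (m : ℝ)) :=
    isLittleO_log_factorial_sub.abs_left.add isLittleO_log_natCast
  have hB := (hL.add (isLittleO_natCast_comp_add_one hL)).comp_tendsto
    (tendsto_nat_floor_atTop (α := ℝ))
  refine IsBigO.trans_isLittleO ?_ (hB.trans_isBigO (IsBigO.of_bound' ?_))
  · refine IsBigO.of_bound' ?_
    filter_upwards [eventually_ge_atTop 2] with y hy
    have hupper := log_Gamma_sub_le_log_factorial_floor_sub hy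
    have hlower := log_factorial_floor_succ_sub_le_log_Gamma_sub hy
    have hlog : 0 ≤ log (⌊y⌋₊ : ℝ) := log_natCast_nonneg _
    have hlog' : 0 ≤ log ((⌊y⌋₊ + 1 : ℕ) : ℝ) := log_natCast_nonneg _
    simp only [Function.comp_apply, norm_eq_abs]
    rw [abs_le, abs_of_nonneg (by positivity)]
    constructor <;> cases abs_cases (A ⌊y⌋₊) <;> cases abs_cases (A (⌊y⌋₊ + 1)) <;> linarith
  · filter_upwards [eventually_ge_atTop 0] with y hy
    simp only [Function.comp_apply, norm_eq_abs, id]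
    rw [abs_of_nonneg (by positivity), abs_of_nonneg hy]
    exact Nat.floor_le hy

end Real

lemma tendsto_mul_log_of_tendsto_rpow_mul {u : ℕ → ℝ} {a : ℝ} (ha : 0 < a)
    (h : Tendsto (fun n : ℕ => (n : ℝ) ^ a * u n) atTop (𝓝 0)) :
    Tendsto (fun n : ℕ => u n * log n) atTop (𝓝 0) := by
  have hlog : Tendsto (fun n : ℕ => log n / (n : ℝ) ^ a) atTop (𝓝 0) :=
    (isLittleO_log_rpow_atTop ha).tendsto_div_nhds_zero.comp tendsto_natCast_atTop_atTop
  rw [← mul_zero 0]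
  refine (h.mul hlog).congr' ?_
  filter_upwards [eventually_ne_atTop 0] with n hn
  have : (n : ℝ) ^ a ≠ 0 := by positivity
  field_simp

lemma tendsto_zero_of_tendsto_rpow_mul {u : ℕ → ℝ} {a : ℝ} (ha : 0 < a)
    (h : Tendsto (fun n : ℕ => (n : ℝ) ^ a * u n) atTop (𝓝 0)) :
    Tendsto u atTop (𝓝 0) := by
  rw [← zero_mul 0]
  refine (h.mul ((tendsto_rpow_neg_atTop ha).comp tendsto_natCast_atTop_atTop)).congr' ?_
  filter_upwards [eventually_ne_atTop 0] with n hn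
  have : (n : ℝ) ^ a ≠ 0 := by positivity
  simp only [Function.comp_apply, rpow_neg (Nat.cast_nonneg n)]
  field_simp

lemma tendsto_atTop_of_tendsto_div_natCast {x : ℕ → ℝ} {c : ℝ} (hc : 0 < c)
    (hq : Tendsto (fun n : ℕ => x n / n) atTop (𝓝 c)) : Tendsto x atTop atTop := by
  refine (hq.pos_mul_atTop hc tendsto_natCast_atTop_atTop).congr' ?_
  filter_upwards [eventually_ne_atTop 0] with n hn
  exact div_mul_cancel₀ _ (Nat.cast_ne_zero.2 hn)

lemma tendsto_log_Gamma_sub_div {x : ℕ → ℝ} {c : ℝ} (hc : 0 < c)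
    (hq : Tendsto (fun n : ℕ => x n / n) atTop (𝓝 c)) :
    Tendsto (fun n : ℕ => (log (Gamma (x n)) - x n * (log (x n) - 1)) / n) atTop (𝓝 0) := by
  have hxO : x =O[atTop] (fun n : ℕ => (n : ℝ)) := by
    refine isBigO_of_div_tendsto_nhds ?_ c hq
    filter_upwards [eventually_ne_atTop 0] with n hn h
    exact absurd h (Nat.cast_ne_zero.2 hn)
  exact ((isLittleO_log_Gamma_sub.comp_tendsto
    (tendsto_atTop_of_tendsto_div_natCast hc hq)).trans_isBigO hxO).tendsto_div_nhds_zero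

lemma tendsto_mul_log_mul_sub {q : ℕ → ℝ} {c : ℝ} (hq : Tendsto q atTop (𝓝 c))
    (hlog : Tendsto (fun n : ℕ => (q n - c) * log n) atTop (𝓝 0)) :
    Tendsto (fun n : ℕ => q n * (log (q n * n) - 1) - c * (log (c * n) - 1)) atTop (𝓝 0) := by
  have hmul_log : Tendsto (fun n => q n * log (q n) - c * log c) atTop (𝓝 0) := by
    simpa using ((continuous_mul_log.tendsto c).comp hq).sub_const (c * log c)
  have hsub : Tendsto (fun n => q n - c) atTop (𝓝 0) := by simpa using hq.sub_const c
  have hsum := (hmul_log.sub hsub).add hlog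
  rw [sub_zero, add_zero] at hsum
  refine hsum.congr' ?_
  filter_upwards [eventually_ne_atTop 0] with n hn
  rw [mul_log_mul_sub_one _ (Nat.cast_ne_zero.2 hn), mul_log_mul_sub_one _ (Nat.cast_ne_zero.2 hn)]
  ring

theorem gamma_nth_root_asymptotics_general (lam : ℝ) (hlam : 0 < lam)
    (x : ℕ → ℝ) (a : ℝ) (ha : 0 < a)
    (hxa : Tendsto (fun n : ℕ => (n : ℝ) ^ a * (x n / n - lam)) atTop (𝓝 0)) :
    Tendsto
      (fun n : ℕ =>
        Real.Gamma (x n) ^ ((n : ℝ)⁻¹) / (lam * n / Real.exp 1) ^ lam)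
      atTop (𝓝 1) := by
  have hq : Tendsto (fun n : ℕ => x n / n) atTop (𝓝 lam) := by
    simpa using (tendsto_zero_of_tendsto_rpow_mul ha hxa).add_const lam
  have hlogGamma : Tendsto (fun n : ℕ => log (Gamma (x n)) / n - lam * (log (lam * n) - 1))
      atTop (𝓝 0) := by
    rw [← add_zero 0]
    refine ((tendsto_log_Gamma_sub_div hlam hq).add
      (tendsto_mul_log_mul_sub hq (tendsto_mul_log_of_tendsto_rpow_mul ha hxa))).congr' ?_
    filter_upwards [eventually_ne_atTop 0] with n hn
    rw [div_mul_cancel₀ _ (Nat.cast_ne_zero.2 hn)]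
    ring
  have hexp := (continuous_exp.tendsto 0).comp hlogGamma
  rw [exp_zero] at hexp
  refine hexp.congr' ?_
  filter_upwards [eventually_gt_atTop 0,
    (tendsto_atTop_of_tendsto_div_natCast hlam hq).eventually_gt_atTop 0] with n hn hxn
  rw [Function.comp_apply, rpow_def_of_pos (Gamma_pos_of_pos hxn),
    rpow_def_of_pos (by positivity), ← exp_sub, log_div (by positivity) (exp_ne_zero 1), log_exp]
  ring_nf

theorem gamma_nth_root_asymptotics (lam : ℝ) (hlam : 0 < lam)
    (x : ℕ → ℝ) (a : ℝ) (ha : 0 < a)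
    (hx : Tendsto (fun n : ℕ => x n / (lam * n)) atTop (𝓝 1))
    (hxa : Tendsto (fun n : ℕ => (n : ℝ) ^ a * (x n / n - lam)) atTop (𝓝 0)) :
    Tendsto
      (fun n : ℕ =>
        Real.Gamma (x n) ^ ((n : ℝ)⁻¹) / (lam * n / Real.exp 1) ^ lam)
      atTop (𝓝 1) :=
  gamma_nth_root_asymptotics_general lam hlam x a ha hxa
end

section
/- Let λ > 0, d ∈ ℕ, and (x_n) satisfy x_n/(λn) → 1 and x_n/n − λ = o(n^{−a}) for some a > 0. Then Γ_d(x_n)^{1/n} / (λn/e)^{λd} → 1, where Γ_d(x) = π^{d(d−1)/4} ∏_{j=1}^d Γ(x − (j−1)/2) is the multivariate Gamma function. -/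
open Filter Topology Finset

/-- The multivariate Gamma function
`Γ_d(x) = π^{d(d−1)/4} ∏_{j=1}^d Γ(x − (j−1)/2)`. -/
noncomputable def multivariateGamma (d : ℕ) (x : ℝ) : ℝ :=
  Real.pi ^ ((d * (d - 1) : ℝ) / 4) *
    ∏ j ∈ Finset.range d, Real.Gamma (x - j / 2)

/-!
By Stirling's formula, `log Γ(y) = y log y - y + O(log y)`, so for `y_n = x_n - c` with
`y_n / n → λ` one gets `log Γ(y_n) / n - λ log (λ n / e) = (y_n / n - λ) log n + o(1)`.
The hypothesis `n^a (x_n / n - λ) → 0` makes `(x_n / n - λ) log n → 0`, and the shift by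
`c = j / 2` only costs `c log n / n → 0`. Summing the `d` factors of `Γ_d`, the `n`-th root of
`Γ_d(x_n)` is `(λ n / e)^{λ d} e^{o(1)}`.
-/

open Real
open scoped Nat

theorem Stirling.log_factorial_le_stirling {n : ℕ} (hn : n ≠ 0) :
    log n ! ≤ n * log n - n + log n / 2 + 1 := by
  obtain ⟨k, rfl⟩ := Nat.exists_eq_succ_of_ne_zero hn
  have hseq : log (stirlingSeq (k + 1)) ≤ 1 - log 2 / 2 := by
    have h := log_stirlingSeq'_antitone (Nat.zero_le k)
    simp only [Function.comp, stirlingSeq_one] at h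
    rwa [log_div (exp_ne_zero 1) (by positivity), log_exp, log_sqrt zero_le_two] at h
  have hn0 : (0 : ℝ) < (k + 1 : ℕ) := by positivity
  have := log_stirlingSeq_formula (k + 1)
  rw [log_mul two_ne_zero hn0.ne', log_div hn0.ne' (exp_ne_zero 1), log_exp] at this
  linarith

/-- Mean value bounds for `t ↦ t log t - t`, whose derivative is `log`. -/
theorem sub_mul_log_le_sub_mul_log_sub {s t : ℝ} (hs : 0 < s) (hst : s ≤ t) :
    (t - s) * log s ≤ (t * log t - t) - (s * log s - s) ∧
      (t * log t - t) - (s * log s - s) ≤ (t - s) * log t := by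
  have ht : 0 < t := hs.trans_le hst
  have hlog : log (t / s) = log t - log s := log_div ht.ne' hs.ne'
  have hlower : t - s ≤ t * log (t / s) := by
    have h := one_sub_inv_le_log_of_pos (div_pos ht hs)
    rw [inv_div] at h
    have := mul_le_mul_of_nonneg_left h ht.le
    rwa [mul_sub, mul_one, mul_div_cancel₀ _ ht.ne'] at this
  have hupper : s * log (t / s) ≤ t - s := by
    have := mul_le_mul_of_nonneg_left (log_le_sub_one_of_pos (div_pos ht hs)) hs.le
    rwa [mul_sub, mul_one, mul_div_cancel₀ _ hs.ne'] at this
  rw [hlog] at hlower hupper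
  constructor <;> linarith

theorem abs_log_Gamma_sub_le {y : ℝ} (hy : 2 ≤ y) :
    |log (Gamma y) - (y * log y - y)| ≤ 2 * log y + 1 := by
  -- `Γ` is increasing on `[2, ∞)`, so `Γ(y)` lies between `Γ(m) = m! / m` and `Γ(m + 1) = m!`.
  set m := ⌊y⌋₊
  have hm2 : 2 ≤ m := Nat.le_floor (by exact_mod_cast hy)
  have hm2' : (2 : ℝ) ≤ m := by exact_mod_cast hm2
  have hm0 : (0 : ℝ) < m := by positivity
  have hmy : (m : ℝ) ≤ y := Nat.floor_le (by linarith)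
  have hym : y ≤ m + 1 := (Nat.lt_floor_add_one y).le
  have hGamma_le : Gamma y ≤ m ! := by
    rw [← Gamma_nat_eq_factorial]
    exact Gamma_strictMonoOn_Ici.monotoneOn (by simp [hy]) (by simp; linarith) hym
  have hle_Gamma : m ! / (m : ℝ) ≤ Gamma y := by
    rw [← Gamma_nat_eq_factorial, Gamma_add_one hm0.ne', mul_div_cancel_left₀ _ hm0.ne']
    exact Gamma_strictMonoOn_Ici.monotoneOn (by simpa using hm2') (by simp [hy]) hmy
  have hupper := log_le_log (Gamma_pos_of_pos (by linarith)) hGamma_le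
  have hlower := log_le_log (by positivity) hle_Gamma
  rw [log_div (by positivity) hm0.ne'] at hlower
  have hfact_le := Stirling.log_factorial_le_stirling (n := m) (by omega)
  have hle_fact := Stirling.le_log_factorial_stirling (n := m) (by omega)
  obtain ⟨hf_lower, hf_upper⟩ := sub_mul_log_le_sub_mul_log_sub hm0 hmy
  have hlog_m : 0 ≤ log m := log_nonneg (by linarith)
  have hlog_my : log m ≤ log y := log_le_log hm0 hmy
  have hlog_2pi : 0 ≤ log (2 * π) := log_nonneg (by nlinarith [pi_gt_three])
  have hgap_upper : (y - m) * log y ≤ log y :=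
    mul_le_of_le_one_left (hlog_m.trans hlog_my) (by linarith)
  have hgap_lower : 0 ≤ (y - m) * log m := mul_nonneg (by linarith) hlog_m
  rw [abs_le]
  constructor <;> linarith

theorem isLittleO_log_Gamma_sub_mul_log_sub :
    (fun y => log (Gamma y) - (y * log y - y)) =o[atTop] id := by
  have hbound : (fun y => log (Gamma y) - (y * log y - y)) =O[atTop] fun y => 2 * log y + 1 :=
    Asymptotics.IsBigO.of_bound 1 <| (eventually_ge_atTop 2).mono fun y hy => by
      rw [one_mul, norm_eq_abs, norm_eq_abs]
      exact (abs_log_Gamma_sub_le hy).trans (le_abs_self _)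
  exact hbound.trans_isLittleO
    ((isLittleO_log_id_atTop.const_mul_left 2).add (Asymptotics.isLittleO_const_id_atTop 1))

theorem tendsto_log_div_rpow_natCast {r : ℝ} (hr : 0 < r) :
    Tendsto (fun n : ℕ => log n / (n : ℝ) ^ r) atTop (𝓝 0) :=
  (isLittleO_log_rpow_atTop hr).tendsto_div_nhds_zero.comp tendsto_natCast_atTop_atTop

theorem tendsto_sub_div_sub_mul_log {lam a : ℝ} (ha : 0 < a) {x : ℕ → ℝ}
    (hxa : Tendsto (fun n : ℕ => (n : ℝ) ^ a * (x n / n - lam)) atTop (𝓝 0)) (c : ℝ) :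
    Tendsto (fun n : ℕ => ((x n - c) / n - lam) * log n) atTop (𝓝 0) := by
  have h := (hxa.mul (tendsto_log_div_rpow_natCast ha)).sub
    ((tendsto_log_div_rpow_natCast one_pos).const_mul c)
  rw [zero_mul, mul_zero, sub_zero] at h
  refine h.congr' ?_
  filter_upwards [eventually_ne_atTop 0] with n hn
  have : (n : ℝ) ^ a ≠ 0 := by positivity
  rw [rpow_one]
  field_simp
  ring

section SequenceAsymptotics

variable {lam : ℝ} {y : ℕ → ℝ}

theorem tendsto_div_natCast_of_tendsto_sub_mul_log
    (hy : Tendsto (fun n : ℕ => (y n / n - lam) * log n) atTop (𝓝 0)) :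
    Tendsto (fun n : ℕ => y n / n) atTop (𝓝 lam) := by
  refine tendsto_sub_nhds_zero_iff.mp
    (squeeze_zero_norm' ?_ (tendsto_zero_iff_norm_tendsto_zero.mp hy))
  filter_upwards [(tendsto_log_atTop.comp tendsto_natCast_atTop_atTop).eventually_ge_atTop 1]
    with n hn
  rw [norm_mul]
  exact le_mul_of_one_le_right (norm_nonneg _) (hn.trans (le_abs_self _))

theorem tendsto_log_Gamma_div_sub_mul_log (hlam : 0 < lam)
    (hy : Tendsto (fun n : ℕ => (y n / n - lam) * log n) atTop (𝓝 0)) :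
    Tendsto (fun n : ℕ => log (Gamma (y n)) / n - lam * log (lam * n / exp 1))
      atTop (𝓝 0) := by
  -- `log Γ(y)/n - λ log (λn/e) = E(y)/n + (y/n - λ) log n + g(y/n) - g(λ)`
  -- with `E(y) = log Γ(y) - (y log y - y)` and `g(t) = t log t - t`.
  have hratio := tendsto_div_natCast_of_tendsto_sub_mul_log hy
  have hy_top : Tendsto y atTop atTop := tendsto_natCast_atTop_atTop.num hlam hratio
  have hE : Tendsto (fun n : ℕ => (log (Gamma (y n)) - (y n * log (y n) - y n)) / n)
      atTop (𝓝 0) := by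
    have := (isLittleO_log_Gamma_sub_mul_log_sub.tendsto_div_nhds_zero.comp hy_top).mul hratio
    rw [zero_mul] at this
    refine this.congr' ?_
    filter_upwards [hy_top.eventually_gt_atTop 0] with n hn
    simp only [Function.comp, id]
    field_simp
  have hg : Tendsto (fun n : ℕ => y n / n * log (y n / n) - y n / n) atTop
      (𝓝 (lam * log lam - lam)) :=
    ((continuous_mul_log.sub continuous_id).tendsto lam).comp hratio
  have h := hE.add (hy.add (hg.sub_const (lam * log lam - lam)))
  rw [zero_add, zero_add, sub_self] at h
  refine h.congr' ?_
  filter_upwards [hy_top.eventually_gt_atTop 0, eventually_ne_atTop 0] with n hyn hn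
  have hn' : (n : ℝ) ≠ 0 := Nat.cast_ne_zero.mpr hn
  rw [log_div hyn.ne' hn', log_div (by positivity) (exp_ne_zero 1), log_mul hlam.ne' hn', log_exp]
  field_simp
  ring

end SequenceAsymptotics

theorem tendsto_nhds_one_of_tendsto_log {α : Type*} {l : Filter α} {f : α → ℝ}
    (hpos : ∀ᶠ i in l, 0 < f i) (h : Tendsto (fun i => log (f i)) l (𝓝 0)) :
    Tendsto f l (𝓝 1) := by
  have := (continuous_exp.tendsto 0).comp h
  rw [exp_zero] at this
  exact this.congr' (hpos.mono fun i hi => exp_log hi)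

section MultivariateGamma

variable {d : ℕ} {x : ℝ}

theorem Gamma_sub_div_two_pos (hx : (d : ℝ) / 2 < x) {j : ℕ} (hj : j ∈ range d) :
    0 < Gamma (x - j / 2) := by
  have : (j : ℝ) < d := by exact_mod_cast mem_range.mp hj
  exact Gamma_pos_of_pos (by linarith)

theorem multivariateGamma_pos (hx : (d : ℝ) / 2 < x) : 0 < multivariateGamma d x :=
  mul_pos (rpow_pos_of_pos pi_pos _) (prod_pos fun _ => Gamma_sub_div_two_pos hx)

theorem log_multivariateGamma (hx : (d : ℝ) / 2 < x) :
    log (multivariateGamma d x) =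
      (d * (d - 1) : ℝ) / 4 * log π + ∑ j ∈ range d, log (Gamma (x - j / 2)) := by
  rw [multivariateGamma,
    log_mul (rpow_pos_of_pos pi_pos _).ne' (prod_pos fun _ => Gamma_sub_div_two_pos hx).ne',
    log_rpow pi_pos, log_prod fun _ hj => (Gamma_sub_div_two_pos hx hj).ne']

end MultivariateGamma

theorem multivariateGamma_nth_root_asymptotics_general (lam : ℝ) (hlam : 0 < lam)
    (d : ℕ) (x : ℕ → ℝ) (a : ℝ) (ha : 0 < a)
    (hxa : Tendsto (fun n : ℕ => (n : ℝ) ^ a * (x n / n - lam)) atTop (𝓝 0)) :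
    Tendsto
      (fun n : ℕ =>
        multivariateGamma d (x n) ^ ((n : ℝ)⁻¹)
          / (lam * n / Real.exp 1) ^ (lam * d))
      atTop (𝓝 1) := by
  have hx_top : Tendsto x atTop atTop := tendsto_natCast_atTop_atTop.num hlam <|
    tendsto_div_natCast_of_tendsto_sub_mul_log (by simpa using tendsto_sub_div_sub_mul_log ha hxa 0)
  have hlog := (tendsto_const_div_atTop_nhds_zero_nat ((d * (d - 1) : ℝ) / 4 * log π)).add
    (tendsto_finsetSum (range d) fun j _ =>
      tendsto_log_Gamma_div_sub_mul_log hlam (tendsto_sub_div_sub_mul_log ha hxa (j / 2)))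
  rw [sum_const_zero, zero_add] at hlog
  have hpos : ∀ᶠ n : ℕ in atTop, (d : ℝ) / 2 < x n ∧ (0 : ℝ) < n :=
    (hx_top.eventually_gt_atTop _).and (tendsto_natCast_atTop_atTop.eventually_gt_atTop 0)
  refine tendsto_nhds_one_of_tendsto_log (hpos.mono fun n ⟨hxn, hn⟩ => ?_) (hlog.congr' ?_)
  · exact div_pos (rpow_pos_of_pos (multivariateGamma_pos hxn) _) (by positivity)
  filter_upwards [hpos] with n ⟨hxn, hn⟩
  rw [log_div (rpow_pos_of_pos (multivariateGamma_pos hxn) _).ne' (by positivity),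
    log_rpow (multivariateGamma_pos hxn), log_rpow (by positivity), log_multivariateGamma hxn,
    sum_sub_distrib, sum_const, card_range, nsmul_eq_mul, ← sum_div]
  field_simp
  ring

theorem multivariateGamma_nth_root_asymptotics (lam : ℝ) (hlam : 0 < lam)
    (d : ℕ) (x : ℕ → ℝ) (a : ℝ) (ha : 0 < a)
    (hx : Tendsto (fun n : ℕ => x n / (lam * n)) atTop (𝓝 1))
    (hxa : Tendsto (fun n : ℕ => (n : ℝ) ^ a * (x n / n - lam)) atTop (𝓝 0)) :
    Tendsto
      (fun n : ℕ =>
        multivariateGamma d (x n) ^ ((n : ℝ)⁻¹)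
          / (lam * n / Real.exp 1) ^ (lam * d))
      atTop (𝓝 1) :=
  multivariateGamma_nth_root_asymptotics_general lam hlam d x a ha hxa
end

section
/- Fix K ∈ ℕ and α₁,…,α_K > 0 with ∑ αₖ = 1. Let μ be a (possibly infinite) measure on the open simplex ▲^K = {p ∈ (0,1)^K : ∑ pₖ = 1} such that ∫ ∏ₖ pₖ dμ(p) ≤ 1, and suppose μ assigns positive measure to every neighborhood of α = (α₁,…,α_K) in ▲^K. Suppose (ℐ_n) is a sequence of K-tuples (I_{n,1},…,I_{n,K}) partitioning [n] with |I_{n,k}|/n → αₖ for each k. Then (∫_{▲^K} ∏ₖ pₖ^{|I_{n,k}|} dμ(p))^{1/n} → ∏ₖ αₖ^{αₖ} as n → ∞. -/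
open MeasureTheory Filter Topology Finset

/-- The open probability simplex `▲^K`. -/
def openSimplex (K : ℕ) : Set (Fin K → ℝ) :=
  {p | (∀ k, 0 < p k ∧ p k < 1) ∧ ∑ k, p k = 1}

/-- Auxiliary: `b^e → x^y` for positive `x`. -/
lemma tendsto_rpow_seq {β : Type*} {l : Filter β} {x y : ℝ} (hx : 0 < x) {b e : β → ℝ}
    (hb : Tendsto b l (𝓝 x)) (he : Tendsto e l (𝓝 y)) :
    Tendsto (fun n => b n ^ e n) l (𝓝 (x ^ y)) :=
  (Real.continuousAt_rpow (x, y) (Or.inl hx.ne')).tendsto.comp (hb.prodMk_nhds he)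

/-- Maximum of the weighted geometric mean on the simplex. -/
lemma prod_rpow_le_of_simplex {K : ℕ} (w : Fin K → ℝ) (hw : ∀ k, 0 ≤ w k)
    (hw1 : ∑ k, w k = 1) {p : Fin K → ℝ} (hp : ∀ k, 0 < p k) (hps : ∑ k, p k ≤ 1) :
    ∏ k, p k ^ w k ≤ ∏ k, w k ^ w k := by
  classical
  set z : Fin K → ℝ := fun k => if w k = 0 then 0 else p k / w k with hz
  have key : ∏ k, z k ^ w k ≤ 1 := by
    calc ∏ k, z k ^ w k ≤ ∑ k, w k * z k :=
          Real.geom_mean_le_arith_mean_weighted Finset.univ w z (fun k _ => hw k)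
            hw1 (fun k _ => by
              by_cases h : w k = 0
              · simp [hz, h]
              · simp only [hz, h, if_false]
                exact div_nonneg (hp k).le (hw k))
      _ ≤ ∑ k, p k := by
          refine Finset.sum_le_sum (fun k _ => ?_)
          by_cases h : w k = 0
          · simp [hz, h]; exact (hp k).le
          · simp only [hz, h, if_false]
            rw [mul_div_cancel₀ _ h]
      _ ≤ 1 := hps
  have heq : ∀ k, p k ^ w k = z k ^ w k * w k ^ w k := by
    intro k
    by_cases h : w k = 0
    · simp [hz, h]
    · have hwk : 0 < w k := lt_of_le_of_ne (hw k) (Ne.symm h)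
      simp only [hz, h, if_false]
      rw [Real.div_rpow (hp k).le (hw k)]
      rw [div_mul_cancel₀]
      exact (Real.rpow_pos_of_pos hwk _).ne'
  calc ∏ k, p k ^ w k = (∏ k, z k ^ w k) * ∏ k, w k ^ w k := by
        rw [← Finset.prod_mul_distrib]; exact Finset.prod_congr rfl fun k _ => heq k
    _ ≤ 1 * ∏ k, w k ^ w k := by
        apply mul_le_mul_of_nonneg_right key
        exact Finset.prod_nonneg fun k _ => Real.rpow_nonneg (hw k) _
    _ = ∏ k, w k ^ w k := one_mul _
theorem nth_root_integral_tendsto {K : ℕ} (α : Fin K → ℝ)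
    (hα : ∀ k, 0 < α k) (hsum : ∑ k, α k = 1)
    (μ : Measure (Fin K → ℝ))
    (hμ1 : ∫⁻ p in openSimplex K, ∏ k, ENNReal.ofReal (p k) ∂μ ≤ 1)
    (hμα : ∀ U ∈ 𝓝 α, 0 < μ (U ∩ openSimplex K))
    (I : (n : ℕ) → Fin K → Finset (Fin n))
    (hdisj : ∀ n, ∀ k l, k ≠ l → Disjoint (I n k) (I n l))
    (hcover : ∀ n, Finset.univ.sup (I n) = (Finset.univ : Finset (Fin n)))
    (hcard : ∀ k, Tendsto (fun n : ℕ => ((I n k).card : ℝ) / n) atTop (𝓝 (α k))) :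
    Tendsto
      (fun n : ℕ =>
        (∫⁻ p in openSimplex K,
            ∏ k, ENNReal.ofReal (p k ^ (((I n k).card : ℝ))) ∂μ) ^ ((n : ℝ)⁻¹))
      atTop (𝓝 (ENNReal.ofReal (∏ k, (α k) ^ (α k)))) := by
  classical
  -- measurability of the simplex
  have hS : MeasurableSet (openSimplex K) := by
    have hEq : openSimplex K =
        (⋂ k, (fun p : Fin K → ℝ => p k) ⁻¹' (Set.Ioo 0 1)) ∩
          {p : Fin K → ℝ | (∑ k, p k) = 1} := by
      ext p
      simp [openSimplex, Set.mem_iInter, forall_and]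
    rw [hEq]
    exact (MeasurableSet.iInter fun k =>
        (measurable_pi_apply k) measurableSet_Ioo).inter
      (measurableSet_eq_fun (Finset.measurable_sum Finset.univ fun k _ => measurable_pi_apply k)
        measurable_const)
  set c : ℕ → Fin K → ℝ := fun n k => ((I n k).card : ℝ) with hcdef
  set f : ℕ → ENNReal := fun n =>
    (∫⁻ p in openSimplex K, ∏ k, ENNReal.ofReal (p k ^ (c n k)) ∂μ) ^ ((n : ℝ)⁻¹) with hfdef
  set L : ENNReal := ENNReal.ofReal (∏ k, (α k) ^ (α k)) with hLdef
  show Tendsto f atTop (𝓝 L)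
  have hsumc : ∀ n, ∑ k, (I n k).card = n := by
    intro n
    have h1 := hcover n
    rw [Finset.sup_eq_biUnion] at h1
    calc ∑ k, (I n k).card = (Finset.univ.biUnion (I n)).card :=
          (Finset.card_biUnion (fun x _ y _ hxy => hdisj n x y hxy)).symm
      _ = n := by rw [h1, Finset.card_univ, Fintype.card_fin]
  have hsc : ∀ n, ∑ k, c n k = (n : ℝ) := by
    intro n
    simp only [hcdef]
    rw [← Nat.cast_sum, hsumc n]
  -- real limits
  have he : ∀ k, Tendsto (fun n : ℕ => (c n k - 1) / n) atTop (𝓝 (α k)) := by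
    intro k
    have h := (hcard k).sub (tendsto_one_div_atTop_nhds_zero_nat)
    rw [sub_zero] at h
    exact h.congr (fun n => by rw [← sub_div])
  have hd : Tendsto (fun n : ℕ => ((n : ℝ) - K) / n) atTop (𝓝 1) := by
    have h0 := (tendsto_const_nhds (x := (1:ℝ)) (f := atTop)).sub
      (tendsto_const_div_atTop_nhds_zero_nat (K : ℝ))
    rw [sub_zero] at h0
    apply h0.congr'
    filter_upwards [eventually_ge_atTop 1] with n hn
    have hn0 : (n : ℝ) ≠ 0 := Nat.cast_ne_zero.mpr (by omega)
    field_simp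
  set b : ℕ → Fin K → ℝ := fun n k => (c n k - 1) / ((n : ℝ) - K) with hbdef
  have hb : ∀ k, Tendsto (fun n : ℕ => b n k) atTop (𝓝 (α k)) := by
    intro k
    have h := (he k).div hd one_ne_zero
    rw [div_one] at h
    apply h.congr'
    filter_upwards [eventually_gt_atTop K] with n hn
    have hn0 : (n : ℝ) ≠ 0 := Nat.cast_ne_zero.mpr (by omega)
    have hnK : ((n : ℝ) - K) ≠ 0 := by
      have : (K : ℝ) < n := by exact_mod_cast hn
      exact sub_ne_zero.mpr (ne_of_gt this)
    simp only [hbdef]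
    simp only [Pi.div_apply]
    field_simp
  have hev1 : ∀ᶠ n : ℕ in atTop, ∀ k, 1 ≤ (I n k).card := by
    rw [Filter.eventually_all]
    intro k
    filter_upwards [(hcard k).eventually (eventually_gt_nhds (hα k))] with n hn
    by_contra h
    have h0 : (I n k).card = 0 := by omega
    rw [h0] at hn
    norm_num at hn
  -- upper bound
  have hub : ∀ᶠ n : ℕ in atTop,
      f n ≤ ENNReal.ofReal (∏ k, (b n k) ^ ((c n k - 1) / n)) := by
    filter_upwards [hev1, eventually_gt_atTop K] with n h1 hnKnat
    have hnK' : (0:ℝ) < (n : ℝ) - K := by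
      have : (K : ℝ) < n := by exact_mod_cast hnKnat
      linarith
    have hw0 : ∀ k, 0 ≤ b n k := by
      intro k
      apply div_nonneg _ hnK'.le
      have := h1 k
      simp only [hcdef, sub_nonneg]
      exact_mod_cast this
    have hw1 : ∑ k, b n k = 1 := by
      simp only [hbdef]
      rw [← Finset.sum_div, Finset.sum_sub_distrib, hsc n, Finset.sum_const,
        Finset.card_univ, Fintype.card_fin, nsmul_eq_mul, mul_one, div_self hnK'.ne']
    have hc0 : ∀ k, (0:ℝ) ≤ c n k := fun k => by
      simp only [hcdef]; positivity
    -- pointwise bound on the simplex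
    have hpt : ∀ p ∈ openSimplex K, (∏ k, ENNReal.ofReal (p k ^ c n k))
        ≤ ENNReal.ofReal (∏ k, b n k ^ (c n k - 1)) * ∏ k, ENNReal.ofReal (p k) := by
      intro p hp
      obtain ⟨hp1, hp2⟩ := hp
      have hppos : ∀ k, 0 < p k := fun k => (hp1 k).1
      have key : ∏ k, p k ^ b n k ≤ ∏ k, b n k ^ b n k :=
        prod_rpow_le_of_simplex (b n) hw0 hw1 hppos (le_of_eq hp2)
      have key2 : ∏ k, p k ^ (c n k - 1) ≤ ∏ k, b n k ^ (c n k - 1) := by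
        calc ∏ k, p k ^ (c n k - 1) = (∏ k, p k ^ b n k) ^ ((n:ℝ) - K) := by
              rw [← Real.finset_prod_rpow _ _ (fun k _ => Real.rpow_nonneg (hppos k).le _) _]
              refine Finset.prod_congr rfl fun k _ => ?_
              rw [← Real.rpow_mul (hppos k).le, div_mul_cancel₀ _ hnK'.ne']
          _ ≤ (∏ k, b n k ^ b n k) ^ ((n:ℝ) - K) :=
              Real.rpow_le_rpow
                (Finset.prod_nonneg fun k _ => Real.rpow_nonneg (hppos k).le _) key hnK'.le
          _ = ∏ k, b n k ^ (c n k - 1) := by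
              rw [← Real.finset_prod_rpow _ _ (fun k _ => Real.rpow_nonneg (hw0 k) _) _]
              refine Finset.prod_congr rfl fun k _ => ?_
              rw [← Real.rpow_mul (hw0 k), div_mul_cancel₀ _ hnK'.ne']
      have hreal : ∏ k, p k ^ c n k ≤ (∏ k, b n k ^ (c n k - 1)) * ∏ k, p k := by
        have hsplit : ∏ k, p k ^ c n k = (∏ k, p k ^ (c n k - 1)) * ∏ k, p k := by
          rw [← Finset.prod_mul_distrib]
          refine Finset.prod_congr rfl fun k _ => ?_
          rw [← Real.rpow_add_one (hppos k).ne' (c n k - 1), sub_add_cancel]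
        rw [hsplit]
        exact mul_le_mul_of_nonneg_right key2
          (Finset.prod_nonneg fun k _ => (hppos k).le)
      calc ∏ k, ENNReal.ofReal (p k ^ c n k)
          = ENNReal.ofReal (∏ k, p k ^ c n k) :=
            (ENNReal.ofReal_prod_of_nonneg (fun k _ => Real.rpow_nonneg (hppos k).le _)).symm
        _ ≤ ENNReal.ofReal ((∏ k, b n k ^ (c n k - 1)) * ∏ k, p k) :=
            ENNReal.ofReal_le_ofReal hreal
        _ = ENNReal.ofReal (∏ k, b n k ^ (c n k - 1)) * ENNReal.ofReal (∏ k, p k) :=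
            ENNReal.ofReal_mul (Finset.prod_nonneg fun k _ => Real.rpow_nonneg (hw0 k) _)
        _ = _ := by rw [ENNReal.ofReal_prod_of_nonneg (fun k _ => (hppos k).le)]
    have hint : (∫⁻ p in openSimplex K, ∏ k, ENNReal.ofReal (p k ^ c n k) ∂μ)
        ≤ ENNReal.ofReal (∏ k, b n k ^ (c n k - 1)) := by
      calc (∫⁻ p in openSimplex K, ∏ k, ENNReal.ofReal (p k ^ c n k) ∂μ)
          ≤ ∫⁻ p in openSimplex K,
              ENNReal.ofReal (∏ k, b n k ^ (c n k - 1)) * ∏ k, ENNReal.ofReal (p k) ∂μ :=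
            setLIntegral_mono' hS hpt
        _ = ENNReal.ofReal (∏ k, b n k ^ (c n k - 1)) *
              ∫⁻ p in openSimplex K, ∏ k, ENNReal.ofReal (p k) ∂μ :=
            lintegral_const_mul' _ _ ENNReal.ofReal_ne_top
        _ ≤ ENNReal.ofReal (∏ k, b n k ^ (c n k - 1)) * 1 :=
            mul_le_mul_right hμ1 _
        _ = _ := mul_one _
    calc f n ≤ (ENNReal.ofReal (∏ k, b n k ^ (c n k - 1))) ^ ((n:ℝ)⁻¹) :=
          ENNReal.rpow_le_rpow hint (by positivity)
      _ = ENNReal.ofReal ((∏ k, b n k ^ (c n k - 1)) ^ ((n:ℝ)⁻¹)) :=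
          ENNReal.ofReal_rpow_of_nonneg
            (Finset.prod_nonneg fun k _ => Real.rpow_nonneg (hw0 k) _) (by positivity)
      _ = ENNReal.ofReal (∏ k, (b n k) ^ ((c n k - 1) / n)) := by
          congr 1
          rw [← Real.finset_prod_rpow _ _ (fun k _ => Real.rpow_nonneg (hw0 k) _) _]
          refine Finset.prod_congr rfl fun k _ => ?_
          rw [← Real.rpow_mul (hw0 k), div_eq_mul_inv]
  have hu : Tendsto (fun n => ENNReal.ofReal (∏ k, (b n k) ^ ((c n k - 1) / n))) atTop (𝓝 L) :=
    (ENNReal.continuous_ofReal.tendsto _).comp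
      (tendsto_finset_prod Finset.univ fun k _ => tendsto_rpow_seq (hα k) (hb k) (he k))
  have hlimsup : limsup f atTop ≤ L :=
    le_trans (limsup_le_limsup hub) (le_of_eq hu.limsup_eq)
  -- lower bound
  have hliminf : L ≤ liminf f atTop := by
    have hεlim : Tendsto (fun ε : ℝ => ENNReal.ofReal (∏ k, (α k - ε) ^ α k))
        (𝓝[>] (0:ℝ)) (𝓝 L) := by
      have hfac : ∀ k : Fin K, Tendsto (fun ε : ℝ => (α k - ε) ^ α k) (𝓝 0) (𝓝 (α k ^ α k)) := by
        intro k
        have h1 : Tendsto (fun ε : ℝ => α k - ε) (𝓝 0) (𝓝 (α k)) := by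
          have := (tendsto_const_nhds (x := α k) (f := 𝓝 (0:ℝ))).sub (tendsto_id (x := 𝓝 (0:ℝ)))
          rwa [sub_zero] at this
        exact tendsto_rpow_seq (hα k) h1 tendsto_const_nhds
      exact ((ENNReal.continuous_ofReal.tendsto _).comp
        (tendsto_finset_prod Finset.univ fun k _ => hfac k)).mono_left nhdsWithin_le_nhds
    refine le_of_tendsto hεlim ?_
    have hεsmall : ∀ᶠ ε : ℝ in 𝓝[>] 0, ∀ k, ε < α k := by
      rw [Filter.eventually_all]
      exact fun k => (eventually_lt_nhds (hα k)).filter_mono nhdsWithin_le_nhds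
    filter_upwards [self_mem_nhdsWithin, hεsmall] with ε hε0 hεα
    replace hε0 : (0:ℝ) < ε := hε0
    have hαε : ∀ k, 0 < α k - ε := fun k => sub_pos.mpr (hεα k)
    -- positive mass near α
    have hm : 0 < μ (Metric.ball α ε ∩ openSimplex K) :=
      hμα _ (Metric.ball_mem_nhds α hε0)
    set m : ENNReal := min (μ (Metric.ball α ε ∩ openSimplex K)) 1 with hmdef
    have hm0 : m ≠ 0 := (lt_min hm zero_lt_one).ne'
    have hmtop : m ≠ ⊤ := ((min_le_right _ _).trans_lt ENNReal.one_lt_top).ne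
    set r : ℝ := m.toReal with hrdef
    have hr0 : 0 < r := ENNReal.toReal_pos hm0 hmtop
    have hmr : m = ENNReal.ofReal r := (ENNReal.ofReal_toReal hmtop).symm
    have hUSmeas : MeasurableSet (Metric.ball α ε ∩ openSimplex K) :=
      Metric.isOpen_ball.measurableSet.inter hS
    have hlow : ∀ᶠ n : ℕ in atTop,
        ENNReal.ofReal (∏ k, (α k - ε) ^ (c n k / n)) * m ^ ((n:ℝ)⁻¹) ≤ f n := by
      filter_upwards with n
      have hc0 : ∀ k, (0:ℝ) ≤ c n k := fun k => Nat.cast_nonneg _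
      have hP0 : (0:ℝ) ≤ ∏ k, (α k - ε) ^ (c n k) :=
        Finset.prod_nonneg fun k _ => Real.rpow_nonneg (hαε k).le _
      have hpt : ∀ p ∈ Metric.ball α ε ∩ openSimplex K,
          ENNReal.ofReal (∏ k, (α k - ε) ^ (c n k)) ≤ ∏ k, ENNReal.ofReal (p k ^ c n k) := by
        intro p hp
        obtain ⟨hpb, hp1, hp2⟩ := hp
        rw [← ENNReal.ofReal_prod_of_nonneg (fun k _ => Real.rpow_nonneg (hp1 k).1.le _)]
        apply ENNReal.ofReal_le_ofReal
        refine Finset.prod_le_prod (fun k _ => Real.rpow_nonneg (hαε k).le _) (fun k _ => ?_)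
        refine Real.rpow_le_rpow (hαε k).le ?_ (hc0 k)
        have hd := dist_le_pi_dist p α k
        rw [Metric.mem_ball] at hpb
        rw [Real.dist_eq] at hd
        have h1 : |p k - α k| < ε := lt_of_le_of_lt hd hpb
        have h2 := (abs_lt.mp h1).1
        linarith
      have hint : ENNReal.ofReal (∏ k, (α k - ε) ^ (c n k)) * m
          ≤ ∫⁻ p in openSimplex K, ∏ k, ENNReal.ofReal (p k ^ (c n k)) ∂μ := by
        calc ENNReal.ofReal (∏ k, (α k - ε) ^ (c n k)) * m
            ≤ ENNReal.ofReal (∏ k, (α k - ε) ^ (c n k)) *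
                μ (Metric.ball α ε ∩ openSimplex K) :=
              mul_le_mul_right (min_le_left _ _) _
          _ = ∫⁻ _ in Metric.ball α ε ∩ openSimplex K,
                ENNReal.ofReal (∏ k, (α k - ε) ^ (c n k)) ∂μ := (setLIntegral_const _ _).symm
          _ ≤ ∫⁻ p in Metric.ball α ε ∩ openSimplex K,
                ∏ k, ENNReal.ofReal (p k ^ (c n k)) ∂μ := setLIntegral_mono' hUSmeas hpt
          _ ≤ _ := lintegral_mono_set Set.inter_subset_right
      calc ENNReal.ofReal (∏ k, (α k - ε) ^ (c n k / n)) * m ^ ((n:ℝ)⁻¹)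
          = (ENNReal.ofReal (∏ k, (α k - ε) ^ (c n k)) * m) ^ ((n:ℝ)⁻¹) := by
            rw [ENNReal.mul_rpow_of_nonneg _ _ (by positivity : (0:ℝ) ≤ (n:ℝ)⁻¹)]
            congr 1
            rw [ENNReal.ofReal_rpow_of_nonneg hP0 (by positivity)]
            congr 1
            rw [← Real.finset_prod_rpow _ _ (fun k _ => Real.rpow_nonneg (hαε k).le _) _]
            refine Finset.prod_congr rfl fun k _ => ?_
            rw [← Real.rpow_mul (hαε k).le, div_eq_mul_inv]
        _ ≤ f n := ENNReal.rpow_le_rpow hint (by positivity)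
    have hv : Tendsto
        (fun n : ℕ => ENNReal.ofReal (∏ k, (α k - ε) ^ (c n k / n)) * m ^ ((n:ℝ)⁻¹))
        atTop (𝓝 (ENNReal.ofReal (∏ k, (α k - ε) ^ (α k)) * 1)) := by
      have h1 : Tendsto (fun n : ℕ => ENNReal.ofReal (∏ k, (α k - ε) ^ (c n k / n))) atTop
          (𝓝 (ENNReal.ofReal (∏ k, (α k - ε) ^ (α k)))) :=
        (ENNReal.continuous_ofReal.tendsto _).comp
          (tendsto_finset_prod Finset.univ fun k _ =>
            tendsto_rpow_seq (hαε k) tendsto_const_nhds (hcard k))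
      have h2 : Tendsto (fun n : ℕ => m ^ ((n:ℝ)⁻¹)) atTop (𝓝 1) := by
        have hreal : Tendsto (fun n : ℕ => r ^ ((n:ℝ)⁻¹)) atTop (𝓝 1) := by
          have h := tendsto_rpow_seq hr0 (tendsto_const_nhds (x := r) (f := atTop))
            (tendsto_natCast_atTop_atTop (R := ℝ)).inv_tendsto_atTop
          rwa [Real.rpow_zero] at h
        have h := (ENNReal.continuous_ofReal.tendsto _).comp hreal
        rw [ENNReal.ofReal_one] at h
        refine h.congr fun n => ?_
        simp only [Function.comp_apply]
        rw [hmr, ENNReal.ofReal_rpow_of_nonneg hr0.le (by positivity)]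
      exact ENNReal.Tendsto.mul h1 (Or.inr ENNReal.one_ne_top) h2 (Or.inl one_ne_zero)
    have hle : ENNReal.ofReal (∏ k, (α k - ε) ^ (α k)) * 1 ≤ liminf f atTop :=
      hv.liminf_eq ▸ liminf_le_liminf hlow
    simpa using hle
  exact tendsto_of_le_liminf_of_limsup_le hliminf hlimsup
end

section
/- Let g(p) = ∏_{k=1}^K pₖ^{αₖ} and g_n(p) = ∏_{k=1}^K pₖ^{c_{n,k}} on the open simplex ▲^K, where αₖ > 0, ∑ₖ αₖ = 1, and c_{n,k} → αₖ uniformly in k. Then sup_{p∈▲^K} |g_n(p)·g(p)^{−1/2} − g(p)^{1/2}| → 0 as n → ∞. -/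
/-!
After rewriting `g_n g^{-1/2} = ∏ p_k^{c_{n,k} - α_k/2}` and `g^{1/2} = ∏ p_k^{α_k/2}`, the quantity
is a difference of two products of numbers in `[0, 1]`, hence at most the sum of the differences of
the factors. On `(0, 1]` the map `t ↦ x^t` has derivative `x^t log x`, bounded by `1/t`, so it is
`1/m`-Lipschitz on `[m, ∞)` uniformly in `x`. Once `c_{n,k} ≥ 3α_k/4`, both exponents are at least
`α_k/4`, and the supremum is bounded by `∑_k 4|c_{n,k} - α_k|/α_k → 0`.
-/

open Filter Topology Finset

theorem Real.abs_rpow_sub_rpow_le_div {x m a b : ℝ} (hx0 : 0 < x) (hx1 : x ≤ 1) (hm : 0 < m)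
    (ha : m ≤ a) (hb : m ≤ b) : |x ^ a - x ^ b| ≤ |a - b| / m := by
  have hderiv : ∀ t, HasDerivWithinAt (fun t => x ^ t) (x ^ t * Real.log x) (Set.Ici m) t :=
    fun t => (Real.hasStrictDerivAt_const_rpow hx0 t).hasDerivAt.hasDerivWithinAt
  have hbound : ∀ t ∈ Set.Ici m, ‖x ^ t * Real.log x‖ ≤ 1 / m := fun t (ht : m ≤ t) => by
    rw [Real.norm_eq_abs, mul_comm]
    exact (Real.abs_log_mul_self_rpow_lt x t hx0 hx1 (hm.trans_le ht)).le.trans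
      (one_div_le_one_div_of_le hm ht)
  have := (convex_Ici m).norm_image_sub_le_of_norm_hasDerivWithin_le (fun t _ => hderiv t)
    hbound hb ha
  simpa only [Real.norm_eq_abs, one_div_mul_eq_div] using this

theorem Finset.norm_prod_sub_prod_le {ι R : Type*} [NormedCommRing R] [NormOneClass R]
    (s : Finset ι) {f g : ι → R} (hf : ∀ i ∈ s, ‖f i‖ ≤ 1) (hg : ∀ i ∈ s, ‖g i‖ ≤ 1) :
    ‖∏ i ∈ s, f i - ∏ i ∈ s, g i‖ ≤ ∑ i ∈ s, ‖f i - g i‖ := by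
  classical
  induction s using Finset.induction_on with
  | empty => simp
  | insert a s ha ih =>
    rw [prod_insert ha, prod_insert ha, sum_insert ha]
    have hfa : ‖f a‖ ≤ 1 := hf a (mem_insert_self a s)
    have hgs : ‖∏ i ∈ s, g i‖ ≤ 1 := (norm_prod_le s g).trans <|
      prod_le_one (fun _ _ => norm_nonneg _) fun i hi => hg i (mem_insert_of_mem hi)
    have ih' := ih (fun i hi => hf i (mem_insert_of_mem hi)) fun i hi => hg i (mem_insert_of_mem hi)
    calc ‖f a * ∏ i ∈ s, f i - g a * ∏ i ∈ s, g i‖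
        = ‖f a * (∏ i ∈ s, f i - ∏ i ∈ s, g i) + (f a - g a) * ∏ i ∈ s, g i‖ := by ring_nf
      _ ≤ ‖f a‖ * ‖∏ i ∈ s, f i - ∏ i ∈ s, g i‖ + ‖f a - g a‖ * ‖∏ i ∈ s, g i‖ :=
          norm_add_le_of_le (norm_mul_le _ _) (norm_mul_le _ _)
      _ ≤ 1 * ∑ i ∈ s, ‖f i - g i‖ + ‖f a - g a‖ * 1 := by gcongr
      _ = ‖f a - g a‖ + ∑ i ∈ s, ‖f i - g i‖ := by ring

theorem Real.prod_rpow_rpow {ι : Type*} (s : Finset ι) {p : ι → ℝ} (hp : ∀ i ∈ s, 0 ≤ p i)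
    (b : ι → ℝ) (r : ℝ) : (∏ i ∈ s, p i ^ b i) ^ r = ∏ i ∈ s, p i ^ (b i * r) := by
  rw [← Real.finsetProd_rpow s _ fun i hi => Real.rpow_nonneg (hp i hi) _]
  exact prod_congr rfl fun i hi => (Real.rpow_mul (hp i hi) _ _).symm

theorem Real.prod_rpow_mul_prod_rpow_neg_half {ι : Type*} (s : Finset ι) {p : ι → ℝ}
    (hp : ∀ i ∈ s, 0 < p i) (a b : ι → ℝ) :
    (∏ i ∈ s, p i ^ a i) * (∏ i ∈ s, p i ^ b i) ^ (-(1 / 2 : ℝ)) =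
      ∏ i ∈ s, p i ^ (a i - b i / 2) := by
  rw [Real.prod_rpow_rpow s (fun i hi => (hp i hi).le), ← prod_mul_distrib]
  refine prod_congr rfl fun i hi => ?_
  rw [← Real.rpow_add (hp i hi), mul_neg, mul_one_div, sub_eq_add_neg]

theorem abs_prod_rpow_mul_rpow_neg_half_sub_rpow_half_le {ι : Type*} [Fintype ι] {α c p : ι → ℝ}
    (hα : ∀ k, 0 < α k) (hc : ∀ k, 3 / 4 * α k ≤ c k) (hp : ∀ k, 0 < p k ∧ p k ≤ 1) :
    |(∏ k, p k ^ c k) * (∏ k, p k ^ α k) ^ (-(1 / 2 : ℝ)) - (∏ k, p k ^ α k) ^ (1 / 2 : ℝ)| ≤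
      ∑ k, |c k - α k| / (α k / 4) := by
  have hfactor : ∀ k (e : ℝ), 0 ≤ e → ‖p k ^ e‖ ≤ 1 := fun k e he => by
    rw [Real.norm_eq_abs, abs_of_nonneg (Real.rpow_nonneg (hp k).1.le e)]
    exact Real.rpow_le_one (hp k).1.le (hp k).2 he
  rw [Real.prod_rpow_mul_prod_rpow_neg_half _ fun k _ => (hp k).1,
    Real.prod_rpow_rpow _ fun k _ => (hp k).1.le]
  refine (norm_prod_sub_prod_le univ (fun k _ => hfactor k _ (by linarith [hα k, hc k]))
    fun k _ => hfactor k _ (by linarith [hα k])).trans (sum_le_sum fun k _ => ?_)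
  have h := Real.abs_rpow_sub_rpow_le_div (m := α k / 4) (a := c k - α k / 2)
    (b := α k * (1 / 2)) (hp k).1 (hp k).2 (by linarith [hα k]) (by linarith [hc k])
    (by linarith [hα k])
  rwa [Real.norm_eq_abs, ← show c k - α k / 2 - α k * (1 / 2) = c k - α k by ring]

theorem sup_diff_tendsto_zero_general {K : ℕ} (α : Fin K → ℝ)
    (hα : ∀ k, 0 < α k)
    (c : ℕ → Fin K → ℝ)
    (hc : ∀ k, Tendsto (fun n : ℕ => c n k) atTop (𝓝 (α k))) :
    Tendsto
      (fun n : ℕ =>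
        sSup ((fun p : Fin K → ℝ =>
            |(∏ k, (p k) ^ (c n k)) * (∏ k, (p k) ^ (α k)) ^ (-(1 / 2 : ℝ))
              - (∏ k, (p k) ^ (α k)) ^ ((1 / 2 : ℝ))|) '' openSimplex K))
      atTop (𝓝 0) := by
  have hclose : ∀ᶠ n in atTop, ∀ k, 3 / 4 * α k ≤ c n k :=
    eventually_all.2 fun k => (hc k).eventually_const_le (by linarith [hα k])
  have hbound : Tendsto (fun n => ∑ k, |c n k - α k| / (α k / 4)) atTop (𝓝 0) := by
    simpa using tendsto_finsetSum univ fun k _ =>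
      ((hc k).sub_const (α k)).abs.div_const (α k / 4)
  refine squeeze_zero' (Eventually.of_forall fun n => Real.sSup_nonneg ?_) ?_ hbound
  · rintro _ ⟨p, -, rfl⟩
    exact abs_nonneg _
  filter_upwards [hclose] with n hn
  refine Real.sSup_le ?_ (sum_nonneg fun k _ => div_nonneg (abs_nonneg _) (by linarith [hα k]))
  rintro _ ⟨p, ⟨hp, -⟩, rfl⟩
  exact abs_prod_rpow_mul_rpow_neg_half_sub_rpow_half_le hα hn fun k => ⟨(hp k).1, (hp k).2.le⟩

theorem sup_diff_tendsto_zero {K : ℕ} (α : Fin K → ℝ)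
    (hα : ∀ k, 0 < α k) (hsum : ∑ k, α k = 1)
    (c : ℕ → Fin K → ℝ) (hc0 : ∀ n k, 0 ≤ c n k)
    (hc : ∀ k, Tendsto (fun n : ℕ => c n k) atTop (𝓝 (α k))) :
    Tendsto
      (fun n : ℕ =>
        sSup ((fun p : Fin K → ℝ =>
            |(∏ k, (p k) ^ (c n k)) * (∏ k, (p k) ^ (α k)) ^ (-(1 / 2 : ℝ))
              - (∏ k, (p k) ^ (α k)) ^ ((1 / 2 : ℝ))|) '' openSimplex K))
      atTop (𝓝 0) :=
  sup_diff_tendsto_zero_general α hα c hc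
end
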